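/- There exists a universal constant c > 0 such that for every n ≥ 1, every r ∈ (1,∞), and every function f : {-1,1}^n → ℝ, inf_{g ∈ P_{>1}^n} ‖f − g‖_r ≥ c · ( |E f| + max_{1 ≤ i ≤ n} |f̂({i})| + sqrt((r−1)/r) · (Σ_{i=1}^n f̂({i})²)^{1/2} ), where E f denotes the mean of f on {-1,1}^n. -/

import Mathlib

open Finset
open scoped ENNReal

noncomputable section

/-- The Walsh function `w_S` on the discrete cube `{-1,1}^n`, where a point of the cube is
encoded as `x : Fin n → Bool`, a coordinate `b : Bool` representing the real number
`if b then 1 else -1`. -/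
def walsh (n : ℕ) (S : Finset (Fin n)) (x : Fin n → Bool) : ℝ :=
  ∏ i ∈ S, (if x i then (1 : ℝ) else -1)

/-- The Fourier--Walsh coefficient `f̂(S) = E[f ⬝ w_S]`. -/
def walshCoeff {n : ℕ} (f : (Fin n → Bool) → ℝ) (S : Finset (Fin n)) : ℝ :=
  (∑ x : Fin n → Bool, f x * walsh n S x) / 2 ^ n

/-- The mean `E f` of `f` with respect to the uniform probability measure on the cube. -/
def cubeMean {n : ℕ} (f : (Fin n → Bool) → ℝ) : ℝ :=
  (∑ x : Fin n → Bool, f x) / 2 ^ n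

/-- The `L_r` norm (`r ∈ [1,∞]`, encoded as `r : ℝ≥0∞`) of `f : {-1,1}^n → ℝ` with respect to
the uniform probability measure; `r = ∞` gives the sup norm. -/
def cubeNorm {n : ℕ} (r : ℝ≥0∞) (f : (Fin n → Bool) → ℝ) : ℝ :=
  if r = ⊤ then Finset.univ.sup' Finset.univ_nonempty (fun x => |f x|)
  else ((∑ x : Fin n → Bool, |f x| ^ r.toReal) / 2 ^ n) ^ (1 / r.toReal)

/-- `f ∈ 𝒫_I^n`: the Fourier--Walsh spectrum of `f` is contained in `I`. -/
def spectrumIn {n : ℕ} (f : (Fin n → Bool) → ℝ) (I : Set ℕ) : Prop :=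
  ∀ S : Finset (Fin n), S.card ∉ I → walshCoeff f S = 0

/-- The `L_r` distance of `f` from the tail space `𝒫_{>k}^n`. -/
def distFromTail {n : ℕ} (k : ℕ) (r : ℝ≥0∞) (f : (Fin n → Bool) → ℝ) : ℝ :=
  sInf {t : ℝ | ∃ g : (Fin n → Bool) → ℝ,
    spectrumIn g {j | k < j} ∧ t = cubeNorm r (fun x => f x - g x)}

/-- The coefficient `c(k,ℓ)` of `x^ℓ` in the `k`-th Chebyshev polynomial of the first kind. -/
def chebC (k ℓ : ℕ) : ℝ := (Polynomial.Chebyshev.T ℝ k).coeff ℓ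

/-- The modified Chebyshev coefficient `c̃(k,ℓ)`. -/
def chebCt (k ℓ : ℕ) : ℝ := if Even (k - ℓ) then chebC k ℓ else chebC (k - 1) ℓ

/-- The `ℓ`-th elementary symmetric multilinear polynomial on `{-1,1}^n`. -/
def elemSymPoly (n ℓ : ℕ) (x : Fin n → Bool) : ℝ :=
  ∑ S ∈ Finset.powersetCard ℓ (Finset.univ : Finset (Fin n)), walsh n S x

/-- The level-`ℓ` Rademacher projection `Rad_ℓ f`. -/
def radProj {n : ℕ} (ℓ : ℕ) (f : (Fin n → Bool) → ℝ) (x : Fin n → Bool) : ℝ :=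
  ∑ S ∈ Finset.powersetCard ℓ (Finset.univ : Finset (Fin n)), walshCoeff f S * walsh n S x

lemma abs_walsh (n : ℕ) (S : Finset (Fin n)) (x : Fin n → Bool) : |walsh n S x| = 1 := by
  rw [walsh, Finset.abs_prod]
  refine Finset.prod_eq_one fun i _ => ?_
  by_cases h : x i <;> simp [h]

lemma walsh_single (n : ℕ) (i : Fin n) (x : Fin n → Bool) :
    walsh n {i} x = if x i then (1:ℝ) else -1 := by simp [walsh]

lemma cubeNorm_ofReal {n : ℕ} {q : ℝ} (hq : 0 < q) (f : (Fin n → Bool) → ℝ) :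
    cubeNorm (ENNReal.ofReal q) f = ((∑ x : Fin n → Bool, |f x| ^ q) / 2 ^ n) ^ (1 / q) := by
  rw [cubeNorm, if_neg ENNReal.ofReal_ne_top, ENNReal.toReal_ofReal hq.le]

lemma cubeNorm_nonneg {n : ℕ} {q : ℝ} (hq : 0 < q) (f : (Fin n → Bool) → ℝ) :
    0 ≤ cubeNorm (ENNReal.ofReal q) f := by
  rw [cubeNorm_ofReal hq]
  positivity

-- MGF factorization
lemma mgf_eq {n : ℕ} (a : Fin n → ℝ) (s : ℝ) :
    ∑ x : Fin n → Bool, Real.exp (s * ∑ i, a i * walsh n {i} x)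
      = ∏ i, (Real.exp (s * a i) + Real.exp (-(s * a i))) := by
  have : ∀ x : Fin n → Bool, Real.exp (s * ∑ i, a i * walsh n {i} x)
      = ∏ i, Real.exp (s * a i * (if x i then (1:ℝ) else -1)) := by
    intro x
    rw [← Real.exp_sum, Finset.mul_sum]
    congr 1
    refine Finset.sum_congr rfl fun i _ => ?_
    rw [walsh_single]; ring
  simp_rw [this]
  rw [← Fintype.piFinset_univ, ← Finset.prod_univ_sum (fun _ => (Finset.univ : Finset Bool))
    (fun i b => Real.exp (s * a i * (if b then (1:ℝ) else -1)))]
  refine Finset.prod_congr rfl fun i _ => ?_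
  rw [Fintype.sum_bool]
  simp
lemma rpow_le_exp {z q : ℝ} (hz : 0 ≤ z) (hq : 1 ≤ q) :
    z ^ q ≤ q ^ q * Real.exp z := by
  have hq0 : 0 < q := lt_of_lt_of_le one_pos hq
  rcases eq_or_lt_of_le hz with h | h
  · rw [← h, Real.zero_rpow hq0.ne']
    positivity
  · have e2 : (0:ℝ) < q ^ q * Real.exp z := by positivity
    rw [← Real.exp_log (Real.rpow_pos_of_pos h q), ← Real.exp_log e2,
      Real.exp_le_exp, Real.log_rpow h, Real.log_mul (by positivity)
      (Real.exp_ne_zero z), Real.log_rpow hq0, Real.log_exp]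
    have hlog : Real.log (z / q) ≤ z / q - 1 := Real.log_le_sub_one_of_pos (by positivity)
    rw [Real.log_div h.ne' hq0.ne'] at hlog
    have h2 : Real.log z ≤ Real.log q + z / q := by linarith
    calc q * Real.log z ≤ q * (Real.log q + z / q) :=
          mul_le_mul_of_nonneg_left h2 hq0.le
      _ = q * Real.log q + z := by field_simp

lemma mgf_le (n : ℕ) (a : Fin n → ℝ) (s : ℝ) :
    ∏ i, (Real.exp (s * a i) + Real.exp (-(s * a i)))
      ≤ 2 ^ n * Real.exp (s ^ 2 * (∑ i, a i ^ 2) / 2) := by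
  have h1 : ∀ i : Fin n, Real.exp (s * a i) + Real.exp (-(s * a i))
      ≤ 2 * Real.exp ((s * a i) ^ 2 / 2) := by
    intro i
    have := Real.cosh_le_exp_half_sq (s * a i)
    rw [Real.cosh_eq] at this
    linarith
  calc ∏ i, (Real.exp (s * a i) + Real.exp (-(s * a i)))
      ≤ ∏ i : Fin n, 2 * Real.exp ((s * a i) ^ 2 / 2) :=
        Finset.prod_le_prod (fun i _ => by positivity) (fun i _ => h1 i)
    _ = 2 ^ n * Real.exp (s ^ 2 * (∑ i, a i ^ 2) / 2) := by
        rw [Finset.prod_mul_distrib, Finset.prod_const, Finset.card_univ, Fintype.card_fin,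
          ← Real.exp_sum]
        congr 2
        rw [Finset.mul_sum, ← Finset.sum_div]
        congr 1
        exact Finset.sum_congr rfl fun i _ => by ring

lemma khintchine {n : ℕ} (a : Fin n → ℝ) {q : ℝ} (hq : 1 ≤ q) :
    cubeNorm (ENNReal.ofReal q) (fun x => ∑ i, a i * walsh n {i} x)
      ≤ 2 * Real.exp 2⁻¹ * Real.sqrt q * Real.sqrt (∑ i, a i ^ 2) := by
  have hq0 : 0 < q := lt_of_lt_of_le one_pos hq
  set σ2 : ℝ := ∑ i, a i ^ 2 with hσ2def
  have hσ2 : 0 ≤ σ2 := Finset.sum_nonneg fun i _ => sq_nonneg _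
  rw [cubeNorm_ofReal hq0]
  rcases eq_or_lt_of_le hσ2 with hz | hσ2pos
  · -- all coefficients vanish
    have ha : ∀ i : Fin n, a i = 0 := by
      intro i
      have := (Finset.sum_eq_zero_iff_of_nonneg (fun i _ => sq_nonneg (a i))).1 hz.symm i
        (Finset.mem_univ i)
      exact pow_eq_zero_iff (n := 2) (by norm_num) |>.1 this
    have : ∀ x : Fin n → Bool, |∑ i, a i * walsh n {i} x| ^ q = 0 := by
      intro x
      rw [Finset.sum_eq_zero fun i _ => by rw [ha i, zero_mul], abs_zero,
        Real.zero_rpow hq0.ne']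
    rw [Finset.sum_congr rfl fun x _ => this x, Finset.sum_const, smul_zero, zero_div,
      Real.zero_rpow (by positivity)]
    positivity
  · set σ : ℝ := Real.sqrt σ2 with hσdef
    have hσpos : 0 < σ := Real.sqrt_pos.2 hσ2pos
    set t : ℝ := Real.sqrt q / σ with htdef
    have htpos : 0 < t := div_pos (Real.sqrt_pos.2 hq0) hσpos
    set h : (Fin n → Bool) → ℝ := fun x => ∑ i, a i * walsh n {i} x with hhdef
    -- pointwise bound
    have hpt : ∀ x : Fin n → Bool, |h x| ^ q
        ≤ q ^ q * (Real.exp (t * h x) + Real.exp (-(t * h x))) / t ^ q := by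
      intro x
      have h1 : (t * |h x|) ^ q ≤ q ^ q * Real.exp (t * |h x|) :=
        rpow_le_exp (by positivity) hq
      rw [Real.mul_rpow htpos.le (abs_nonneg _)] at h1
      have h2 : Real.exp (t * |h x|) ≤ Real.exp (t * h x) + Real.exp (-(t * h x)) := by
        rcases abs_cases (h x) with ⟨he, _⟩ | ⟨he, _⟩
        · rw [he]
          have := (Real.exp_pos (-(t * h x))).le
          linarith
        · rw [he, mul_neg]
          have := (Real.exp_pos (t * h x)).le
          linarith
      rw [le_div_iff₀ (Real.rpow_pos_of_pos htpos q), mul_comm (|h x| ^ q) (t ^ q)]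
      calc t ^ q * |h x| ^ q ≤ q ^ q * Real.exp (t * |h x|) := h1
        _ ≤ q ^ q * (Real.exp (t * h x) + Real.exp (-(t * h x))) :=
            mul_le_mul_of_nonneg_left h2 (by positivity)
    have e1 : ∑ x : Fin n → Bool, Real.exp (t * h x) ≤ 2 ^ n * Real.exp (q / 2) := by
      have ht2 : t ^ 2 * σ2 / 2 = q / 2 := by
        rw [htdef, div_pow, Real.sq_sqrt hq0.le, Real.sq_sqrt hσ2]
        field_simp
      calc ∑ x : Fin n → Bool, Real.exp (t * h x)
          = ∏ i, (Real.exp (t * a i) + Real.exp (-(t * a i))) := mgf_eq a t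
        _ ≤ 2 ^ n * Real.exp (t ^ 2 * σ2 / 2) := mgf_le n a t
        _ = 2 ^ n * Real.exp (q / 2) := by rw [ht2]
    have e2 : ∑ x : Fin n → Bool, Real.exp (-(t * h x)) ≤ 2 ^ n * Real.exp (q / 2) := by
      have ht2 : (-t) ^ 2 * σ2 / 2 = q / 2 := by
        rw [neg_sq, htdef, div_pow, Real.sq_sqrt hq0.le, Real.sq_sqrt hσ2]
        field_simp
      calc ∑ x : Fin n → Bool, Real.exp (-(t * h x))
          = ∑ x : Fin n → Bool, Real.exp ((-t) * h x) := by
            refine Finset.sum_congr rfl fun x _ => ?_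
            rw [neg_mul]
        _ = ∏ i, (Real.exp (-t * a i) + Real.exp (-(-t * a i))) := mgf_eq a (-t)
        _ ≤ 2 ^ n * Real.exp ((-t) ^ 2 * σ2 / 2) := mgf_le n a (-t)
        _ = 2 ^ n * Real.exp (q / 2) := by rw [ht2]
    have hS : (∑ x : Fin n → Bool, |h x| ^ q)
        ≤ 2 ^ n * (2 * (q ^ q / t ^ q) * Real.exp (q / 2)) := by
      calc ∑ x : Fin n → Bool, |h x| ^ q
          ≤ ∑ x : Fin n → Bool,
            q ^ q * (Real.exp (t * h x) + Real.exp (-(t * h x))) / t ^ q :=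
            Finset.sum_le_sum fun x _ => hpt x
        _ = q ^ q / t ^ q * ((∑ x : Fin n → Bool, Real.exp (t * h x))
            + ∑ x : Fin n → Bool, Real.exp (-(t * h x))) := by
            rw [← Finset.sum_add_distrib, Finset.mul_sum]
            refine Finset.sum_congr rfl fun x _ => ?_
            ring
        _ ≤ q ^ q / t ^ q * (2 ^ n * Real.exp (q / 2) + 2 ^ n * Real.exp (q / 2)) := by
            refine mul_le_mul_of_nonneg_left (add_le_add e1 e2) (by positivity)
        _ = 2 ^ n * (2 * (q ^ q / t ^ q) * Real.exp (q / 2)) := by ring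
    have hfinal : ((∑ x : Fin n → Bool, |h x| ^ q) / 2 ^ n) ^ (1 / q)
        ≤ (2 * (q ^ q / t ^ q) * Real.exp (q / 2)) ^ (1 / q) := by
      apply Real.rpow_le_rpow (by positivity) ?_ (by positivity)
      rw [div_le_iff₀ (by positivity)]
      linarith [hS]
    have heq : (2 * (q ^ q / t ^ q) * Real.exp (q / 2)) ^ (1 / q)
        = (2:ℝ) ^ (1 / q) * (Real.sqrt q * σ) * Real.exp 2⁻¹ := by
      rw [Real.mul_rpow (by positivity) (by positivity),
        Real.mul_rpow (by positivity) (by positivity),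
        Real.div_rpow (by positivity) (by positivity),
        ← Real.rpow_mul hq0.le, ← Real.rpow_mul htpos.le,
        mul_one_div_cancel hq0.ne', Real.rpow_one, Real.rpow_one,
        ← Real.exp_mul]
      have hx : q / 2 * (1 / q) = 2⁻¹ := by field_simp
      have hqt : q / t = Real.sqrt q * σ := by
        rw [htdef, div_div_eq_mul_div, mul_comm q σ, mul_div_assoc, Real.div_sqrt, mul_comm]
      rw [hx, hqt]
    have h2q : (2:ℝ) ^ (1 / q) ≤ 2 := by
      calc (2:ℝ) ^ (1 / q) ≤ (2:ℝ) ^ (1:ℝ) :=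
          Real.rpow_le_rpow_of_exponent_le one_le_two (by
            rw [div_le_one hq0]; exact hq)
        _ = 2 := Real.rpow_one 2
    calc ((∑ x : Fin n → Bool, |h x| ^ q) / 2 ^ n) ^ (1 / q)
        ≤ (2:ℝ) ^ (1 / q) * (Real.sqrt q * σ) * Real.exp 2⁻¹ := heq ▸ hfinal
      _ ≤ 2 * (Real.sqrt q * σ) * Real.exp 2⁻¹ := by
          refine mul_le_mul_of_nonneg_right
            (mul_le_mul_of_nonneg_right h2q (by positivity)) (by positivity)
      _ = 2 * Real.exp 2⁻¹ * Real.sqrt q * σ := by ring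

lemma sum_mul_walsh {n : ℕ} (u : (Fin n → Bool) → ℝ) (S : Finset (Fin n)) :
    ∑ x : Fin n → Bool, u x * walsh n S x = walshCoeff u S * 2 ^ n := by
  rw [walshCoeff, div_mul_cancel₀]
  positivity

lemma walshCoeff_sub {n : ℕ} (f g : (Fin n → Bool) → ℝ) (S : Finset (Fin n)) :
    walshCoeff (fun x => f x - g x) S = walshCoeff f S - walshCoeff g S := by
  rw [walshCoeff, walshCoeff, walshCoeff, ← sub_div, ← Finset.sum_sub_distrib]
  congr 1
  exact Finset.sum_congr rfl fun x _ => by ring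

lemma cubeNorm_walsh {n : ℕ} {q : ℝ} (hq : 0 < q) (S : Finset (Fin n)) :
    cubeNorm (ENNReal.ofReal q) (walsh n S) = 1 := by
  rw [cubeNorm_ofReal hq]
  have : ∀ x : Fin n → Bool, |walsh n S x| ^ q = 1 := fun x => by
    rw [abs_walsh, Real.one_rpow]
  rw [Finset.sum_congr rfl fun x _ => this x, Finset.sum_const, Finset.card_univ]
  have hcard : Fintype.card (Fin n → Bool) = 2 ^ n := by
    simp [Fintype.card_fun]
  rw [hcard]
  simp

lemma holder {n : ℕ} (u v : (Fin n → Bool) → ℝ) {p q : ℝ} (hpq : Real.HolderConjugate p q) :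
    |∑ x : Fin n → Bool, u x * v x|
      ≤ cubeNorm (ENNReal.ofReal p) u * cubeNorm (ENNReal.ofReal q) v * 2 ^ n := by
  have hp0 : 0 < p := hpq.pos
  have hq0 : 0 < q := hpq.symm.pos
  have hN : (0:ℝ) < 2 ^ n := by positivity
  set A : ℝ := ∑ x : Fin n → Bool, |u x| ^ p with hA
  set B : ℝ := ∑ x : Fin n → Bool, |v x| ^ q with hB
  have hA0 : 0 ≤ A := Finset.sum_nonneg fun x _ => Real.rpow_nonneg (abs_nonneg _) _
  have hB0 : 0 ≤ B := Finset.sum_nonneg fun x _ => Real.rpow_nonneg (abs_nonneg _) _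
  have hNN : ((2:ℝ)^n) ^ (1/p) * ((2:ℝ)^n) ^ (1/q) = 2 ^ n := by
    rw [← Real.rpow_add hN, show 1/p + 1/q = 1 by
      rw [one_div, one_div, hpq.inv_add_inv_eq_one]]
    exact Real.rpow_one _
  have key : cubeNorm (ENNReal.ofReal p) u * cubeNorm (ENNReal.ofReal q) v * 2 ^ n
      = A ^ (1/p) * B ^ (1/q) := by
    rw [cubeNorm_ofReal hp0, cubeNorm_ofReal hq0, Real.div_rpow hA0 hN.le,
      Real.div_rpow hB0 hN.le]
    have e : A ^ (1/p) / ((2:ℝ)^n) ^ (1/p) * (B ^ (1/q) / ((2:ℝ)^n) ^ (1/q)) * 2 ^ n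
        = A ^ (1/p) * B ^ (1/q) * (2^n) / (((2:ℝ)^n) ^ (1/p) * ((2:ℝ)^n) ^ (1/q)) := by
      ring
    rw [e, hNN, mul_div_cancel_right₀ _ hN.ne']
  rw [key, abs_le]
  constructor
  · have H := Real.inner_le_Lp_mul_Lq Finset.univ (fun x => -(u x)) v hpq
    simp only [abs_neg, neg_mul, Finset.sum_neg_distrib] at H
    linarith
  · exact Real.inner_le_Lp_mul_Lq Finset.univ u v hpq

lemma coeff_bounds {n : ℕ} {r : ℝ} (hr : 1 < r) (f g : (Fin n → Bool) → ℝ)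
    (hg : spectrumIn g {j | 1 < j}) :
    |cubeMean f| ≤ cubeNorm (ENNReal.ofReal r) (fun x => f x - g x)
    ∧ (∀ i : Fin n, |walshCoeff f {i}| ≤ cubeNorm (ENNReal.ofReal r) (fun x => f x - g x))
    ∧ Real.sqrt ((r - 1) / r) * Real.sqrt (∑ i : Fin n, (walshCoeff f {i}) ^ 2)
        ≤ 2 * Real.exp 2⁻¹ * cubeNorm (ENNReal.ofReal r) (fun x => f x - g x) := by
  have hr0 : 0 < r := by linarith
  have hpq : r.HolderConjugate (Real.conjExponent r) := .conjExponent hr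
  set q : ℝ := Real.conjExponent r with hqdef
  have hq0 : 0 < q := hpq.symm.pos
  have hq1 : 1 ≤ q := hpq.symm.lt.le
  set u : (Fin n → Bool) → ℝ := fun x => f x - g x with hudef
  set D : ℝ := cubeNorm (ENNReal.ofReal r) u with hDdef
  have hD0 : 0 ≤ D := cubeNorm_nonneg hr0 u
  have hN : (0:ℝ) < 2 ^ n := by positivity
  have hcu : ∀ S : Finset (Fin n), S.card ∉ {j | 1 < j} → walshCoeff u S = walshCoeff f S := by
    intro S hS
    rw [hudef, walshCoeff_sub, hg S hS, sub_zero]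
  have hcu0 : walshCoeff u ∅ = walshCoeff f ∅ := hcu ∅ (by simp)
  have hcui : ∀ i : Fin n, walshCoeff u {i} = walshCoeff f {i} := fun i =>
    hcu {i} (by simp)
  -- single-coefficient bounds
  have single : ∀ S : Finset (Fin n), |walshCoeff u S| ≤ D := by
    intro S
    have h1 := holder u (walsh n S) hpq
    rw [sum_mul_walsh, cubeNorm_walsh hq0, mul_one, abs_mul, abs_of_pos hN] at h1
    exact le_of_mul_le_mul_right h1 hN
  have bound1 : |cubeMean f| ≤ D := by
    have : walshCoeff f ∅ = cubeMean f := by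
      rw [walshCoeff, cubeMean]
      congr 1
      refine Finset.sum_congr rfl fun x _ => ?_
      rw [walsh, Finset.prod_empty, mul_one]
    rw [← this, ← hcu0]
    exact single ∅
  have bound2 : ∀ i : Fin n, |walshCoeff f {i}| ≤ D := by
    intro i
    rw [← hcui i]
    exact single {i}
  refine ⟨bound1, bound2, ?_⟩
  -- level-one bound
  set a : Fin n → ℝ := fun i => walshCoeff f {i} with hadef
  set W : ℝ := ∑ i : Fin n, a i ^ 2 with hWdef
  have hW0 : 0 ≤ W := Finset.sum_nonneg fun i _ => sq_nonneg _
  set h : (Fin n → Bool) → ℝ := fun x => ∑ i, a i * walsh n {i} x with hhdef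
  have hsum : ∑ x : Fin n → Bool, u x * h x = W * 2 ^ n := by
    calc ∑ x : Fin n → Bool, u x * h x
        = ∑ x : Fin n → Bool, ∑ i : Fin n, a i * (u x * walsh n {i} x) := by
          refine Finset.sum_congr rfl fun x _ => ?_
          rw [hhdef, Finset.mul_sum]
          exact Finset.sum_congr rfl fun i _ => by ring
      _ = ∑ i : Fin n, a i * ∑ x : Fin n → Bool, u x * walsh n {i} x := by
          rw [Finset.sum_comm]
          exact Finset.sum_congr rfl fun i _ => by rw [Finset.mul_sum]
      _ = ∑ i : Fin n, a i * (walshCoeff f {i} * 2 ^ n) := by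
          refine Finset.sum_congr rfl fun i _ => ?_
          rw [sum_mul_walsh, hcui i]
      _ = W * 2 ^ n := by
          rw [hWdef, Finset.sum_mul]
          exact Finset.sum_congr rfl fun i _ => by rw [hadef]; ring
  have hH := holder u h hpq
  rw [hsum, abs_of_nonneg (by positivity)] at hH
  have hWD : W ≤ D * cubeNorm (ENNReal.ofReal q) h := by
    have := le_of_mul_le_mul_right (by linarith [hH] :
      W * 2 ^ n ≤ D * cubeNorm (ENNReal.ofReal q) h * 2 ^ n) hN
    exact this
  have hK : cubeNorm (ENNReal.ofReal q) h ≤ 2 * Real.exp 2⁻¹ * Real.sqrt q * Real.sqrt W :=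
    khintchine a hq1
  have hrr : 0 ≤ (r - 1) / r := div_nonneg (by linarith) (by linarith)
  have hsq : Real.sqrt ((r - 1) / r) * Real.sqrt q = 1 := by
    rw [← Real.sqrt_mul hrr]
    have : (r - 1) / r * q = 1 := by
      rw [hqdef, Real.conjExponent]
      field_simp
      exact div_self (by intro hc; rw [sub_eq_zero] at hc; exact (ne_of_gt hr) hc)
    rw [this, Real.sqrt_one]
  rcases eq_or_lt_of_le hW0 with hWz | hWpos
  · rw [← hWz, Real.sqrt_zero, mul_zero]
    exact mul_nonneg (by positivity) hD0
  · have hsW : 0 < Real.sqrt W := Real.sqrt_pos.2 hWpos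
    have step : Real.sqrt W ≤ D * (2 * Real.exp 2⁻¹ * Real.sqrt q) := by
      refine le_of_mul_le_mul_right ?_ hsW
      calc Real.sqrt W * Real.sqrt W = W := Real.mul_self_sqrt hW0
        _ ≤ D * (2 * Real.exp 2⁻¹ * Real.sqrt q * Real.sqrt W) :=
            le_trans hWD (mul_le_mul_of_nonneg_left hK hD0)
        _ = D * (2 * Real.exp 2⁻¹ * Real.sqrt q) * Real.sqrt W := by ring
    calc Real.sqrt ((r - 1) / r) * Real.sqrt W
        ≤ Real.sqrt ((r - 1) / r) * (D * (2 * Real.exp 2⁻¹ * Real.sqrt q)) :=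
          mul_le_mul_of_nonneg_left step (Real.sqrt_nonneg _)
      _ = 2 * Real.exp 2⁻¹ * D * (Real.sqrt ((r - 1) / r) * Real.sqrt q) := by ring
      _ = 2 * Real.exp 2⁻¹ * D := by rw [hsq, mul_one]


/-- lower bound in the dual Hitczenko theorem for the `L_r` distance
from the tail space `𝒫_{>1}^n`, `1 < r < ∞`. -/
theorem stmt_3 : ∃ c : ℝ, 0 < c ∧
    ∀ n : ℕ, ∀ hn : 1 ≤ n, ∀ r : ℝ, 1 < r → ∀ f : (Fin n → Bool) → ℝ,
      c * (|cubeMean f|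
          + (Finset.univ : Finset (Fin n)).sup' ⟨⟨0, hn⟩, Finset.mem_univ _⟩
              (fun i => |walshCoeff f {i}|)
          + Real.sqrt ((r - 1) / r) * Real.sqrt (∑ i : Fin n, (walshCoeff f {i}) ^ 2)) ≤
        distFromTail 1 (ENNReal.ofReal r) f := by
  refine ⟨(6 * Real.exp 2⁻¹)⁻¹, by positivity, ?_⟩
  intro n hn r hr f
  apply le_csInf
  · exact ⟨cubeNorm (ENNReal.ofReal r) (fun x => f x - (fun _ => (0:ℝ)) x), fun _ => 0,
      fun S _ => by simp [walshCoeff], rfl⟩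
  · rintro b ⟨g, hg, rfl⟩
    obtain ⟨b1, b2, b3⟩ := coeff_bounds hr f g hg
    set D := cubeNorm (ENNReal.ofReal r) (fun x => f x - g x) with hD
    have hD0 : 0 ≤ D := cubeNorm_nonneg (by linarith) _
    have hsup : (Finset.univ : Finset (Fin n)).sup' ⟨⟨0, hn⟩, Finset.mem_univ _⟩
        (fun i => |walshCoeff f {i}|) ≤ D := Finset.sup'_le _ _ fun i _ => b2 i
    set E := Real.exp 2⁻¹ with hE
    have he1 : (1:ℝ) ≤ E := Real.one_le_exp (by norm_num)
    have hsum : |cubeMean f|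
        + (Finset.univ : Finset (Fin n)).sup' ⟨⟨0, hn⟩, Finset.mem_univ _⟩
            (fun i => |walshCoeff f {i}|)
        + Real.sqrt ((r - 1) / r) * Real.sqrt (∑ i : Fin n, (walshCoeff f {i}) ^ 2)
        ≤ (2 + 2 * E) * D := by linarith
    have hc : (6 * E)⁻¹ * (2 + 2 * E) ≤ 1 := by
      rw [inv_mul_le_iff₀ (by positivity)]
      linarith
    calc (6 * E)⁻¹ * (|cubeMean f|
          + (Finset.univ : Finset (Fin n)).sup' ⟨⟨0, hn⟩, Finset.mem_univ _⟩
              (fun i => |walshCoeff f {i}|)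
          + Real.sqrt ((r - 1) / r) * Real.sqrt (∑ i : Fin n, (walshCoeff f {i}) ^ 2))
        ≤ (6 * E)⁻¹ * ((2 + 2 * E) * D) := by
          exact mul_le_mul_of_nonneg_left hsum (by positivity)
      _ = (6 * E)⁻¹ * (2 + 2 * E) * D := by ring
      _ ≤ 1 * D := mul_le_mul_of_nonneg_right hc hD0
      _ = D := one_mul D
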